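/- Let X ⊆ Y be topological spaces and α < ω₁. The following are equivalent: (i) X ∈ F_α(Y); (ii) H(∅) = X for some l(T)-scheme H whose sets are closed in Y, where T is a well-founded tree with r_l(T) ≤ α; (iii) H(∅) = X for some closed l(T_α)-scheme H in Y; (iv) the scheme of closures H̄^Y, defined by H̄^Y(t) = cl_Y(H(t)∩X), satisfies H̄^Y(∅) = X for some l(T)-scheme H of subsets of X with r_l(T) ≤ α; (v) H̄^Y(∅) = X for some l(T_α)-scheme H of subsets of X. -/

import Mathlib

noncomputable section
open Classical Set Topology Filter Ordinal

universe u v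

namespace FBorelPaper

/-! ### Ordinal parity -/

/-- The first uncountable ordinal. -/
def omega1 : Ordinal.{0} := Ordinal.omega 1

/-- An ordinal `a = λ + m` (with `λ` limit or zero, `m < ω`) is *even* iff `m` is even. -/
def EvenOrd (a : Ordinal.{0}) : Prop := a % 2 = 0

/-- An ordinal `a = λ + m` (with `λ` limit or zero, `m < ω`) is *odd* iff `m` is odd. -/
def OddOrd (a : Ordinal.{0}) : Prop := a % 2 = 1

/-- For `a = λ + 2n + i` (with `λ` limit or zero, `n < ω`, `i ∈ {0,1}`),
`ordPrime a = λ + n` (the ordinal `α'` of the paper). -/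
def ordPrime (a : Ordinal.{0}) : Ordinal.{0} :=
  Ordinal.omega0 * (a / Ordinal.omega0) + (a % Ordinal.omega0) / 2

/-! ### The F-Borel hierarchy -/

/-- The `F`-Borel hierarchy of a topological space: `FBorel Y 0` is the family of closed
sets, and for `0 < a`, `FBorel Y a` consists of all countable unions (for odd `a`),
resp. countable intersections (for even `a`), of members of `⋃ b < a, FBorel Y b`. -/
def FBorel (Y : Type u) [TopologicalSpace Y] : Ordinal.{0} → Set (Set Y) :=
  WellFounded.fix Ordinal.lt_wf (C := fun _ => Set (Set Y)) fun a ih =>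
    if a = 0 then { F | IsClosed F }
    else if EvenOrd a then
      { S | ∃ f : ℕ → Set Y, (∀ n, ∃ b, ∃ h : b < a, f n ∈ ih b h) ∧ S = ⋂ n, f n }
    else
      { S | ∃ f : ℕ → Set Y, (∀ n, ∃ b, ∃ h : b < a, f n ∈ ih b h) ∧ S = ⋃ n, f n }

/-- The list `(σ 0, …, σ (k-1))` of the first `k` values of `σ : ℕ → ℕ`. -/
def seqPrefix (σ : ℕ → ℕ) (k : ℕ) : List ℕ := List.ofFn fun i : Fin k => σ i

/-- A Suslin scheme: a monotone family of sets indexed by finite sequences. -/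
def IsSuslinScheme {Y : Type u} (C : List ℕ → Set Y) : Prop :=
  ∀ ⦃s t : List ℕ⦄, s <+: t → C t ⊆ C s

/-- The Suslin operation `A(C) = ⋃_{σ ∈ ω^ω} ⋂_k C(σ|k)`. -/
def suslinOp {Y : Type u} (C : List ℕ → Set Y) : Set Y :=
  ⋃ σ : ℕ → ℕ, ⋂ k : ℕ, C (seqPrefix σ k)

/-- The Suslin-F subsets of `Y`: results of the Suslin operation applied to schemes of
closed sets. -/
def SuslinF (Y : Type u) [TopologicalSpace Y] : Set (Set Y) :=
  { S | ∃ C : List ℕ → Set Y, (∀ s, IsClosed (C s)) ∧ S = suslinOp C }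

/-- The classes `F_a(Y)` for `a ≤ ω₁`, where `F_{ω₁}(Y)` is the class of Suslin-F sets. -/
def FClass (Y : Type u) [TopologicalSpace Y] (a : Ordinal.{0}) : Set (Set Y) :=
  if a < omega1 then FBorel Y a else SuslinF Y

/-- `ComplIn Y X` is the complexity of `X` in `Y`: the least `a ≤ ω₁` with `X ∈ F_a(Y)`. -/
def ComplIn (Y : Type u) [TopologicalSpace Y] (X : Set Y) : Ordinal.{0} :=
  sInf { a : Ordinal.{0} | a ≤ omega1 ∧ X ∈ FClass Y a }

/-! ### Compactifications, K-analytic spaces, local complexity -/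

/-- `(K, e)` is a compactification of `X`: `K` is compact Hausdorff and `e` is a dense
embedding of `X` into `K`. -/
def IsCompactification (X : Type u) [TopologicalSpace X] (K : Type u) [TopologicalSpace K]
    (e : X → K) : Prop :=
  CompactSpace K ∧ T2Space K ∧ IsEmbedding e ∧ DenseRange e

/-- The set `Compl(X)` of all complexities attained by `X` in its compactifications. -/
def AttainedCompl (X : Type u) [TopologicalSpace X] : Set Ordinal.{0} :=
  { γ | ∃ (K : Type u) (_ : TopologicalSpace K) (e : X → K),
      IsCompactification X K e ∧ Set.range e ∈ SuslinF K ∧ γ = ComplIn K (Set.range e) }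

/-- A topological space is K-analytic iff it embeds as a Suslin-F subset of some compact
Hausdorff space. -/
def IsKAnalytic (X : Type u) [TopologicalSpace X] : Prop :=
  ∃ (K : Type u) (_ : TopologicalSpace K) (e : X → K),
    CompactSpace K ∧ T2Space K ∧ IsEmbedding e ∧ Set.range e ∈ SuslinF K

/-- The local complexity `Compl_y(X, Y)`: the least complexity of `cl(U) ∩ X` in `Y` over
all open neighborhoods `U` of `y` in `Y`. -/
def locComplAt (Y : Type u) [TopologicalSpace Y] (X : Set Y) (y : Y) : Ordinal.{0} :=
  sInf { γ : Ordinal.{0} | ∃ U : Set Y, IsOpen U ∧ y ∈ U ∧ γ = ComplIn Y (closure U ∩ X) }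

/-- The local complexity `Compl_loc(X, Y) = sup_{x ∈ X} Compl_x(X, Y)`. -/
def locCompl (Y : Type u) [TopologicalSpace Y] (X : Set Y) : Ordinal.{0} :=
  ⨆ x : X, locComplAt Y X (x : Y)

/-- The local complexity `Compl_locbar(X, Y) = sup_{y ∈ Y} Compl_y(X, Y)`. -/
def locComplBar (Y : Type u) [TopologicalSpace Y] (X : Set Y) : Ordinal.{0} :=
  ⨆ y : Y, locComplAt Y X y

/-! ### Trees on ω -/

/-- A tree on `ω`: a set of finite sequences closed under initial segments. -/
def IsTree (T : Set (List ℕ)) : Prop := ∀ ⦃s t : List ℕ⦄, s <+: t → t ∈ T → s ∈ T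

/-- A tree is well-founded iff it carries no infinite branch. -/
def WellFoundedTree (T : Set (List ℕ)) : Prop := ¬ ∃ σ : ℕ → ℕ, ∀ k : ℕ, seqPrefix σ k ∈ T

/-- `t` is a leaf of `T`: it belongs to `T` and has no immediate successor in `T`. -/
def IsLeafOf (T : Set (List ℕ)) (t : List ℕ) : Prop := t ∈ T ∧ ∀ n : ℕ, t ++ [n] ∉ T

/-- The tree `T^t = {s | t⌢s ∈ T}` corresponding to `t` in `T`. -/
def subtreeAt (T : Set (List ℕ)) (t : List ℕ) : Set (List ℕ) := { s | t ++ s ∈ T }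

/-- The smallest tree containing a set `S` of finite sequences. -/
def clTr (S : Set (List ℕ)) : Set (List ℕ) := { u | ∃ s ∈ S, u <+: s }

/-- The leaf derivative: keep the elements having some proper extension in `T`. -/
def leafDeriv (T : Set (List ℕ)) : Set (List ℕ) := { t ∈ T | ∃ s ∈ T, t <+: s ∧ t ≠ s }

/-- The derivative `D_iie`: keep the `t ∈ T` admitting infinitely many pairwise
incomparable extensions in `T` of pairwise different lengths. -/
def Diie (T : Set (List ℕ)) : Set (List ℕ) :=
  { t ∈ T | ∃ g : ℕ → List ℕ, (∀ n, g n ∈ T ∧ t <+: g n) ∧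
      ∀ ⦃m n : ℕ⦄, m < n →
        (¬ g m <+: g n) ∧ (¬ g n <+: g m) ∧ (g m).length ≠ (g n).length }

/-- Transfinitely iterated derivative, starting from `cl_Tr S` and taking intersections
at limit stages. -/
def iterDeriv (D : Set (List ℕ) → Set (List ℕ)) (S : Set (List ℕ)) (γ : Ordinal.{0}) :
    Set (List ℕ) :=
  Ordinal.limitRecOn γ (clTr S) (fun _ ih => D ih)
    (fun a _ ih => ⋂ b : Ordinal.{0}, ⋂ h : b < a, ih b h)

/-- The rank associated with the leaf derivative: the least `γ` such that the `(γ+1)`-st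
iterated leaf derivative is empty, and `ω₁` if there is no such countable ordinal. -/
def leafRank (T : Set (List ℕ)) : Ordinal.{0} :=
  if ∃ γ : Ordinal.{0}, γ < omega1 ∧ iterDeriv leafDeriv T (γ + 1) = ∅ then
    sInf { γ : Ordinal.{0} | iterDeriv leafDeriv T (γ + 1) = ∅ }
  else omega1

/-- `E` is the canonical extension of the `l(T)`-scheme `H` to the whole of `T`:
it agrees with `H` on the leaves of `T`, and at a non-leaf `t ∈ T` it is the union
(resp. the intersection) of its values at the immediate successors of `t` in `T` when
the leaf-rank of `T^t` is odd (resp. even). -/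
def IsSchemeExtension (Y : Type u) [TopologicalSpace Y] (T : Set (List ℕ))
    (H E : List ℕ → Set Y) : Prop :=
  (∀ t, IsLeafOf T t → E t = H t) ∧
  (∀ t ∈ T, ¬ IsLeafOf T t → OddOrd (leafRank (subtreeAt T t)) →
      E t = ⋃ n ∈ { n : ℕ | t ++ [n] ∈ T }, E (t ++ [n])) ∧
  (∀ t ∈ T, ¬ IsLeafOf T t → EvenOrd (leafRank (subtreeAt T t)) →
      E t = ⋂ n ∈ { n : ℕ | t ++ [n] ∈ T }, E (t ++ [n]))

/-- `H` (an `l(T)`-scheme of subsets of `X`) is a *universal simple `F_α`-representation*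
of `X`: `r_l(T) ≤ α`, and for every space `Y` containing (a copy of) `X`, the extension
of the scheme of closures `(cl_Y (H t))_t` computes `X` at the root. -/
def HasUniversalSimpleRep (X : Type u) [TopologicalSpace X] (α : Ordinal.{0}) : Prop :=
  ∃ (T : Set (List ℕ)) (H : List ℕ → Set X), IsTree T ∧ WellFoundedTree T ∧ [] ∈ T ∧
    leafRank T ≤ α ∧
    ∀ (Y : Type u) (_ : TopologicalSpace Y) (e : X → Y), IsEmbedding e →
      ∃ E : List ℕ → Set Y,
        IsSchemeExtension Y T (fun t => closure (e '' H t)) E ∧ E [] = Set.range e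

/-! ### Canonical trees -/

/-- Auxiliary indices for the canonical trees: at a successor `a = b + 1` every index is
`b`, and at a countable limit the indices enumerate all ordinals `< a` injectively. -/
def canonIdx (a : Ordinal.{0}) (n : ℕ) : Ordinal.{0} :=
  if hs : ∃ b, a = b + 1 then hs.choose
  else if hf : ∃ f : ℕ → Ordinal.{0}, Function.Injective f ∧ Set.range f = Set.Iio a then
    hf.choose n
  else 0

theorem canonIdx_lt {a : Ordinal.{0}} (h0 : a ≠ 0) (n : ℕ) : canonIdx a n < a := by
  unfold canonIdx
  split
  · next hs =>
      conv_rhs => rw [hs.choose_spec]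
      rw [Ordinal.add_one_eq_succ]
      exact Order.lt_succ _
  · split
    · next hf =>
        have hmem : hf.choose n ∈ Set.range hf.choose := Set.mem_range_self n
        rw [hf.choose_spec.2] at hmem
        exact hmem
    · first
        | exact pos_iff_ne_zero.mpr h0
        | exact lt_of_le_of_ne (zero_le _) (Ne.symm h0)

/-- The canonical "maximal" trees `T_α` of leaf-rank `α < ω₁` (with `T_α = ω^{<ω}` for
`α ≥ ω₁`): `T_0 = {∅}`, `T_{α+1} = {∅} ∪ ⋃_n n⌢T_α`, and at countable limits
`T_α = {∅} ∪ ⋃_n n⌢T_{π_α(n)}` for an injective enumeration `π_α` of `α`. -/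
def canonTree : Ordinal.{0} → Set (List ℕ) :=
  WellFounded.fix Ordinal.lt_wf (C := fun _ => Set (List ℕ)) fun a ih =>
    if h0 : a = 0 then {([] : List ℕ)}
    else if omega1 ≤ a then Set.univ
    else {([] : List ℕ)} ∪ ⋃ n : ℕ, (List.cons n) '' ih (canonIdx a n) (canonIdx_lt h0 n)

/-- The canonical trees `T^c_α`: `T_{α'}` for even `α`, and `{∅} ∪ 1⌢T_{α'}` for odd `α`. -/
def canonTreeC (a : Ordinal.{0}) : Set (List ℕ) :=
  if EvenOrd a then canonTree (ordPrime a)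
  else {([] : List ℕ)} ∪ (List.cons 1) '' canonTree (ordPrime a)

/-- The canonical trees `T^c_{α,i} = {∅} ∪ i⌢T_{α'}` (for odd `α`). -/
def canonTreeCi (a : Ordinal.{0}) (i : ℕ) : Set (List ℕ) :=
  {([] : List ℕ)} ∪ (List.cons i) '' canonTree (ordPrime a)

/-! ### Admissible maps, `R_T` and regular representations -/

/-- An admissible map on a tree `T`: monotone w.r.t. extension, with
`|φ(t)| = t(0) + ⋯ + t(|t|-1)` for all `t ∈ T`. -/
def Admissible (T : Set (List ℕ)) (φ : List ℕ → List ℕ) : Prop :=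
  (∀ ⦃s t : List ℕ⦄, s ∈ T → t ∈ T → s <+: t → φ s <+: φ t) ∧
  (∀ t ∈ T, (φ t).length = t.sum)

/-- `R_T(C)`: the points of `C(∅)` admitting an admissible witness map along `T`. -/
def RT {Y : Type u} (T : Set (List ℕ)) (C : List ℕ → Set Y) : Set Y :=
  { x | x ∈ C [] ∧ ∃ φ : List ℕ → List ℕ, Admissible T φ ∧ ∀ t ∈ T, x ∈ C (φ t) }

/-- `R_α(C) = R_{T^c_α}(C)`. -/
def Ralpha {Y : Type u} (a : Ordinal.{0}) (C : List ℕ → Set Y) : Set Y :=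
  RT (canonTreeC a) C

/-- A Suslin scheme `C` of subsets of `X ⊆ Y` is *complete on `X`*: it is a Suslin scheme
on `X` (it consists of subsets of `X` and the Suslin operation applied to it covers `X`)
such that every nontrivial filter containing, for each `n`, a set `C s` with `|s| = n`,
has an accumulation point in `X`. -/
def IsCompleteOn (Y : Type u) [TopologicalSpace Y] (X : Set Y) (C : List ℕ → Set Y) :
    Prop :=
  IsSuslinScheme C ∧ (∀ s, C s ⊆ X) ∧ X ⊆ suslinOp C ∧
  ∀ F : Filter Y, F.NeBot → (∀ n : ℕ, ∃ s : List ℕ, s.length = n ∧ C s ∈ F) →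
    ∃ x ∈ X, ClusterPt x F

/-- The tree `S_C(y)` of finite sequences `s` with `y ∈ cl_Y (C s)`. -/
def SCtree (Y : Type u) [TopologicalSpace Y] (C : List ℕ → Set Y) (y : Y) :
    Set (List ℕ) :=
  { s : List ℕ | y ∈ closure (C s) }

/-! ### Zoom spaces -/

/-- The set of isolated points of a topological space. -/
def IsolPts (Y : Type u) [TopologicalSpace Y] : Set Y := { y | IsOpen ({y} : Set Y) }

/-- The underlying set of the zoom space `Z(Y, X)`: the non-isolated points of `Y`
together with the disjoint union of the spaces `X i`, `i ∈ I_Y`. -/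
def ZoomCarrier (Y : Type u) [TopologicalSpace Y] (X : IsolPts Y → Type v) :
    Type (max u v) :=
  ({ y : Y // y ∉ IsolPts Y }) ⊕ ((i : IsolPts Y) × X i)

/-- The basic set `V_U ⊆ Z(Y, X)` associated with `U ⊆ Y`:
`V_U = (U ∖ I_Y) ∪ ⋃ {X i | i ∈ U ∩ I_Y}`. -/
def zoomVSet (Y : Type u) [TopologicalSpace Y] (X : IsolPts Y → Type v) (U : Set Y) :
    Set (ZoomCarrier Y X) :=
  { z | Sum.elim (fun y : { y : Y // y ∉ IsolPts Y } => (y : Y) ∈ U)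
      (fun p : (i : IsolPts Y) × X i => (p.1 : Y) ∈ U) z }

/-- The topology of the zoom space `Z(Y, X)`, generated by the open subsets of the
spaces `X i` together with the sets `V_U` for `U` open in `Y`. -/
instance zoomTopology (Y : Type u) [TopologicalSpace Y] (X : IsolPts Y → Type v)
    [∀ i, TopologicalSpace (X i)] : TopologicalSpace (ZoomCarrier Y X) :=
  TopologicalSpace.generateFrom
    ({ B | ∃ (i : IsolPts Y) (W : Set (X i)), IsOpen W ∧
        B = Sum.inr '' ((Sigma.mk i) '' W) } ∪
     { B | ∃ U : Set Y, IsOpen U ∧ B = zoomVSet Y X U })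

/-- The subset of `Z(Y, X)` which is the underlying set of the zoom space `Z(Ys, A)` of
a subspace `Ys ⊆ Y` with respect to subspaces `A i ⊆ X i`
(here the isolated points of `Ys` are identified with those of `Y`). -/
def zoomSub (Y : Type u) [TopologicalSpace Y] (X : IsolPts Y → Type v) (Ys : Set Y)
    (A : ∀ i : IsolPts Y, Set (X i)) : Set (ZoomCarrier Y X) :=
  { z | Sum.elim (fun y : { y : Y // y ∉ IsolPts Y } => (y : Y) ∈ Ys)
      (fun p : (i : IsolPts Y) × X i => p.2 ∈ A p.1) z }

/-! ### Broom sets and broom spaces -/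

/-- A forking sequence: a sequence of nonempty finite sequences with pairwise distinct
first entries. -/
def IsForking (f : ℕ → List ℕ) : Prop :=
  (∀ n, f n ≠ []) ∧ ∀ ⦃m n : ℕ⦄, m ≠ n → (f m).head? ≠ (f n).head?

/-- The hierarchy of finite broom sets: `B ∈ B_α` iff `IsBroomB α B`.
`B_0 = {{∅}}`; for odd `α`, `B_α = B_{<α} ∪ {h⌢B | B ∈ B_{α-1}, h ∈ ω^{<ω}}`; for even
`α > 0`, `B_α = B_{<α} ∪ {⋃_n f_n⌢B_n | B_n ∈ B_{<α}, (f_n) a forking sequence}`. -/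
inductive IsBroomB : Ordinal.{0} → Set (List ℕ) → Prop
  | base : IsBroomB 0 {[]}
  | mono {β α : Ordinal.{0}} {B : Set (List ℕ)} : β < α → IsBroomB β B → IsBroomB α B
  | odd {β : Ordinal.{0}} {B : Set (List ℕ)} (h : List ℕ) : EvenOrd β → IsBroomB β B →
      IsBroomB (β + 1) ((fun s => h ++ s) '' B)
  | even {α : Ordinal.{0}} {f : ℕ → List ℕ} {Bs : ℕ → Set (List ℕ)}
      (g : ℕ → Ordinal.{0}) :
      0 < α → EvenOrd α → IsForking f →
      (∀ n : ℕ, g n < α) → (∀ n : ℕ, IsBroomB (g n) (Bs n)) →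
      IsBroomB α (⋃ n : ℕ, (fun s => f n ++ s) '' Bs n)

/-- The infinite sequence `s⌢ν` obtained by extending the finite sequence `s` by `ν`. -/
def seqAppend (s : List ℕ) (ν : ℕ → ℕ) : ℕ → ℕ :=
  fun k => if h : k < s.length then s.get ⟨k, h⟩ else ν (k - s.length)

/-- `A` is a broom-extension of `B`:
`A = {s⌢f^s_n⌢ν^s_n | s ∈ B, n ∈ ω}` for forking sequences `(f^s_n)_n, s ∈ B`, and
points `ν^s_n ∈ ω^ω`. -/
def IsBroomExtension (B : Set (List ℕ)) (A : Set (ℕ → ℕ)) : Prop :=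
  ∃ (f : List ℕ → ℕ → List ℕ) (ν : List ℕ → ℕ → (ℕ → ℕ)),
    (∀ s ∈ B, IsForking (f s)) ∧
    A = { σ : ℕ → ℕ | ∃ s ∈ B, ∃ n : ℕ, σ = seqAppend (s ++ f s n) (ν s n) }

/-- The hierarchy of infinite broom sets: `A ∈ A_α` iff `A` is a broom-extension of some
`B ∈ B_α`. -/
def IsBroomA (α : Ordinal.{0}) (A : Set (ℕ → ℕ)) : Prop :=
  ∃ B : Set (List ℕ), IsBroomB α B ∧ IsBroomExtension B A

/-- `u` is a finite initial segment of the infinite sequence `σ`. -/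
def InfExtends (u : List ℕ) (σ : ℕ → ℕ) : Prop := seqPrefix σ u.length = u

/-- The tree of all finite initial segments of members of a set of infinite sequences. -/
def clTrInf (S : Set (ℕ → ℕ)) : Set (List ℕ) := { u | ∃ σ ∈ S, InfExtends u σ }

/-- The broom space `T_𝒜` on `ω^ω ∪ {∞}` (with `∞ = none`): every point of `ω^ω` is
isolated, and the neighborhood subbasis at `∞` consists of the complements of single
points of `ω^ω` and of the complements of the sets `A ∈ 𝒜`. -/
def broomTop (𝒜 : Set (Set (ℕ → ℕ))) : TopologicalSpace (Option (ℕ → ℕ)) :=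
  TopologicalSpace.generateFrom
    ({ S | ∃ σ : ℕ → ℕ, S = {Option.some σ} } ∪
     { S | ∃ σ : ℕ → ℕ, S = insert Option.none (Option.some '' ({σ}ᶜ)) } ∪
     { S | ∃ A ∈ 𝒜, S = insert Option.none (Option.some '' Aᶜ) })


/-
The value of a leaf scheme at a node `t` is computed by recursion on the leaf-rank of `T^t`,
which drops strictly from a node to each of its children. Induction along this recursion puts
the value at `t` into `F_{r_l(T^t)}`, which gives (ii) → (i).

Conversely, a set in `F_α` is a countable union or intersection of sets of lower class; these
pieces can be placed injectively on the children of the root of `T_α`, the `n`-th piece lying in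
`F_{π_α(n)}`. Grafting the canonical closed schemes of the pieces onto the children yields
(i) → (iii); by induction, every extension of the grafted leaf scheme has value `X` at the root.

For (iii) → (v), put `H'(t) = H(t) ∩ X`. Since the leaves `H(t)` are closed, the closure scheme
lies below the original one, and a point of `X` lies in the closure scheme wherever it lies in
the original scheme; both comparisons propagate from the leaves to the root.
-/

theorem evenOrd_or_oddOrd (a : Ordinal.{0}) : EvenOrd a ∨ OddOrd a := by
  refine Order.le_one_iff.1 (Order.lt_succ_iff.1 ?_)
  simpa [one_add_one_eq_two] using Ordinal.mod_lt a two_ne_zero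

theorem EvenOrd.not_oddOrd {a : Ordinal.{0}} (h : EvenOrd a) : ¬ OddOrd a :=
  fun h' => zero_ne_one (h.symm.trans h')

theorem OddOrd.ne_zero {a : Ordinal.{0}} (h : OddOrd a) : a ≠ 0 := by
  rintro rfl
  simp [OddOrd] at h

section FBorel

variable {Y : Type u} [TopologicalSpace Y] {S : Set Y} {a : Ordinal.{0}}

theorem fborel_eq (a : Ordinal.{0}) :
    FBorel Y a =
      if a = 0 then { F | IsClosed F }
      else if EvenOrd a then
        { S | ∃ f : ℕ → Set Y, (∀ n, ∃ b, ∃ _ : b < a, f n ∈ FBorel Y b) ∧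
          S = ⋂ n, f n }
      else
        { S | ∃ f : ℕ → Set Y, (∀ n, ∃ b, ∃ _ : b < a, f n ∈ FBorel Y b) ∧
          S = ⋃ n, f n } := by
  unfold FBorel
  rw [WellFounded.fix_eq]

theorem mem_fborel_zero : S ∈ FBorel Y 0 ↔ IsClosed S := by
  rw [fborel_eq, if_pos rfl]
  rfl

theorem mem_fborel_of_evenOrd (h0 : a ≠ 0) (he : EvenOrd a) :
    S ∈ FBorel Y a ↔
      ∃ f : ℕ → Set Y, (∀ n, ∃ b < a, f n ∈ FBorel Y b) ∧ S = ⋂ n, f n := by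
  rw [fborel_eq, if_neg h0, if_pos he]
  simp only [exists_prop, Set.mem_ofPred_eq]

theorem mem_fborel_of_oddOrd (ho : OddOrd a) :
    S ∈ FBorel Y a ↔
      ∃ f : ℕ → Set Y, (∀ n, ∃ b < a, f n ∈ FBorel Y b) ∧ S = ⋃ n, f n := by
  rw [fborel_eq, if_neg ho.ne_zero, if_neg fun he => he.not_oddOrd ho]
  simp only [exists_prop, Set.mem_ofPred_eq]

theorem fborel_mono {b : Ordinal.{0}} (hba : b ≤ a) : FBorel Y b ⊆ FBorel Y a := by
  rcases hba.eq_or_lt with rfl | hba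
  · rfl
  intro S hS
  rcases evenOrd_or_oddOrd a with he | ho
  · exact (mem_fborel_of_evenOrd hba.ne_bot he).2
      ⟨fun _ => S, fun _ => ⟨b, hba, hS⟩, (Set.iInter_const S).symm⟩
  · exact (mem_fborel_of_oddOrd ho).2
      ⟨fun _ => S, fun _ => ⟨b, hba, hS⟩, (Set.iUnion_const S).symm⟩

theorem _root_.IsClosed.mem_fborel (hS : IsClosed S) (a : Ordinal.{0}) : S ∈ FBorel Y a :=
  fborel_mono (b := 0) zero_le (mem_fborel_zero.2 hS)

theorem biUnion_mem_fborel (ho : OddOrd a) {s : Set ℕ} (hs : s.Nonempty) {f : ℕ → Set Y}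
    (hf : ∀ n ∈ s, ∃ b < a, f n ∈ FBorel Y b) : ⋃ n ∈ s, f n ∈ FBorel Y a := by
  obtain ⟨g, rfl⟩ := s.to_countable.exists_eq_range hs
  rw [Set.biUnion_range]
  exact (mem_fborel_of_oddOrd ho).2 ⟨_, fun k => hf _ (Set.mem_range_self k), rfl⟩

theorem biInter_mem_fborel (h0 : a ≠ 0) (he : EvenOrd a) {s : Set ℕ} (hs : s.Nonempty)
    {f : ℕ → Set Y} (hf : ∀ n ∈ s, ∃ b < a, f n ∈ FBorel Y b) :
    ⋂ n ∈ s, f n ∈ FBorel Y a := by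
  obtain ⟨g, rfl⟩ := s.to_countable.exists_eq_range hs
  rw [Set.biInter_range]
  exact (mem_fborel_of_evenOrd h0 he).2 ⟨_, fun k => hf _ (Set.mem_range_self k), rfl⟩

end FBorel

theorem canonIdx_succ (b : Ordinal.{0}) (n : ℕ) : canonIdx (Order.succ b) n = b := by
  have hs : ∃ c : Ordinal.{0}, Order.succ b = c + 1 := ⟨b, Order.succ_eq_add_one b⟩
  rw [canonIdx, dif_pos hs]
  exact (Order.succ_injective (by simpa only [Order.succ_eq_add_one] using hs.choose_spec)).symm

theorem exists_injective_range_eq_Iio {a : Ordinal.{0}} (hω : Ordinal.omega0 ≤ a)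
    (ha : a < omega1) :
    ∃ f : ℕ → Ordinal.{0}, Function.Injective f ∧ Set.range f = Set.Iio a := by
  have hcount : (Set.Iio a).Countable := by
    rw [← Cardinal.le_aleph0_iff_set_countable, Cardinal.mk_Iio_ordinal, Cardinal.lift_le_aleph0,
      ← Cardinal.lt_aleph_one_iff]
    exact Cardinal.lt_omega_iff_card_lt.1 ha
  have hinf : (Set.Iio a).Infinite :=
    Set.infinite_of_injective_forall_mem Nat.cast_injective fun n =>
      (Ordinal.natCast_lt_omega0 n).trans_le hω
  have := hcount.to_subtype
  have := hinf.to_subtype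
  obtain ⟨e⟩ := nonempty_equiv_of_countable (α := ℕ) (β := Set.Iio a)
  refine ⟨Subtype.val ∘ e, Subtype.val_injective.comp e.injective, ?_⟩
  rw [Set.range_comp, e.range_eq_univ, Set.image_univ, Subtype.range_coe]

theorem exists_canonIdx_eq {a c : Ordinal.{0}} (hl : Order.IsSuccLimit a) (ha : a < omega1)
    (hc : c < a) : ∃ n, canonIdx a n = c := by
  have hns : ¬ ∃ b, a = b + 1 := by
    rintro ⟨b, rfl⟩
    rw [← Order.succ_eq_add_one] at hl
    exact Order.not_isSuccLimit_succ b hl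
  have hf := exists_injective_range_eq_Iio (Ordinal.omega0_le_of_isSuccLimit hl) ha
  have hidx : canonIdx a = hf.choose := funext fun n => by rw [canonIdx, dif_neg hns, dif_pos hf]
  rw [hidx, ← Set.mem_range, hf.choose_spec.2]
  exact hc

theorem exists_strictMono_le_of_isSuccLimit {β : Type*} [LinearOrder β] [SuccOrder β] {a : β}
    (hl : Order.IsSuccLimit a) {b : ℕ → β} (hb : ∀ n, b n < a) :
    ∃ γ : ℕ → β, StrictMono γ ∧ (∀ n, b n ≤ γ n) ∧ ∀ n, γ n < a := by
  let γ : ℕ → β := fun n => Nat.rec (b 0) (fun k g => max (b (k + 1)) (Order.succ g)) n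
  have hγa : ∀ n, γ n < a := fun n => by
    induction n with
    | zero => exact hb 0
    | succ k ih => exact max_lt (hb _) (hl.succ_lt ih)
  refine ⟨γ, strictMono_nat_of_lt_succ fun n => ?_, fun n => ?_, hγa⟩
  · exact (Order.lt_succ_of_not_isMax (hγa n).not_isMax).trans_le (le_max_right _ _)
  · cases n with
    | zero => exact le_rfl
    | succ k => exact le_max_left _ _

theorem exists_injective_le_canonIdx {a : Ordinal.{0}} (h0 : a ≠ 0) (ha : a < omega1)
    {b : ℕ → Ordinal.{0}} (hb : ∀ n, b n < a) :
    ∃ m : ℕ → ℕ, Function.Injective m ∧ ∀ n, b n ≤ canonIdx a (m n) := by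
  rcases Ordinal.zero_or_succ_or_isSuccLimit a with rfl | ⟨c, rfl⟩ | hl
  · exact absurd rfl h0
  · exact ⟨id, Function.injective_id,
      fun n => (canonIdx_succ c n).symm ▸ Order.lt_succ_iff.1 (hb n)⟩
  · obtain ⟨γ, hγ, hbγ, hγa⟩ := exists_strictMono_le_of_isSuccLimit hl hb
    choose m hm using fun n => exists_canonIdx_eq hl ha (hγa n)
    refine ⟨m, fun i j hij => hγ.injective ?_, fun n => (hm n).symm ▸ hbγ n⟩
    rw [← hm i, ← hm j, hij]

theorem forall_canonIdx_lt_iff {a γ : Ordinal.{0}} (h0 : a ≠ 0) (ha : a < omega1) :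
    (∀ n, canonIdx a n < γ) ↔ a ≤ γ := by
  refine ⟨fun h => not_lt.1 fun hγ => ?_, fun h n => (canonIdx_lt h0 n).trans_le h⟩
  obtain ⟨m, -, hm⟩ := exists_injective_le_canonIdx h0 ha (b := fun _ => γ) fun _ => hγ
  exact (hm 0).not_gt (h (m 0))

section Trees

variable {T : Set (List ℕ)}

theorem IsTree.nil_mem (hT : IsTree T) (h : T.Nonempty) : [] ∈ T :=
  let ⟨_, ht⟩ := h
  hT List.nil_prefix ht

theorem IsTree.eq_empty_iff (hT : IsTree T) : T = ∅ ↔ [] ∉ T :=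
  ⟨fun h => h ▸ Set.notMem_empty _,
    fun h => Set.not_nonempty_iff_eq_empty.1 (h ∘ hT.nil_mem)⟩

theorem IsTree.subtreeAt (hT : IsTree T) (t : List ℕ) : IsTree (subtreeAt T t) :=
  fun _ _ hsu hu => hT ((List.prefix_append_right_inj t).2 hsu) hu

theorem IsTree.clTr_eq (hT : IsTree T) : clTr T = T :=
  Set.Subset.antisymm (fun _ ⟨_, hs, hus⟩ => hT hus hs) fun s hs => ⟨s, hs, List.prefix_rfl⟩

theorem IsTree.leafDeriv (hT : IsTree T) : IsTree (leafDeriv T) := by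
  rintro s t hst ⟨ht, u, hu, htu, hne⟩
  refine ⟨hT hst ht, u, hu, hst.trans htu, fun hsu => hne ?_⟩
  subst hsu
  exact htu.eq_of_length (le_antisymm htu.length_le hst.length_le)

theorem nil_mem_leafDeriv_iff (hT : IsTree T) : [] ∈ leafDeriv T ↔ ∃ n, [n] ∈ T := by
  constructor
  · rintro ⟨-, (_ | ⟨n, s⟩), hs, -, hne⟩
    · exact absurd rfl hne
    · exact ⟨n, hT (List.cons_prefix_cons.2 ⟨rfl, List.nil_prefix⟩) hs⟩
  · rintro ⟨n, hn⟩
    exact ⟨hT List.nil_prefix hn, [n], hn, List.nil_prefix, (List.cons_ne_nil n []).symm⟩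

theorem nil_mem_subtreeAt {t : List ℕ} : [] ∈ subtreeAt T t ↔ t ∈ T := by
  simp [subtreeAt]

theorem subtreeAt_subtreeAt (T : Set (List ℕ)) (t s : List ℕ) :
    subtreeAt (subtreeAt T t) s = subtreeAt T (t ++ s) := by
  ext u
  simp [subtreeAt]

theorem isLeafOf_subtreeAt {t s : List ℕ} :
    IsLeafOf (subtreeAt T t) s ↔ IsLeafOf T (t ++ s) := by
  simp [IsLeafOf, subtreeAt]

theorem leafDeriv_subtreeAt (T : Set (List ℕ)) (t : List ℕ) :
    leafDeriv (subtreeAt T t) = subtreeAt (leafDeriv T) t := by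
  ext s
  constructor
  · rintro ⟨hs, u, hu, hsu, hne⟩
    exact ⟨hs, t ++ u, hu, (List.prefix_append_right_inj t).2 hsu,
      fun h => hne (List.append_cancel_left h)⟩
  · rintro ⟨hs, w, hw, hsw, hne⟩
    obtain ⟨v, rfl⟩ := hsw
    exact ⟨hs, s ++ v, by simpa [subtreeAt] using hw, List.prefix_append s v,
      fun h => hne (by rw [List.append_assoc, ← h])⟩

end Trees

theorem iterDeriv_zero (D : Set (List ℕ) → Set (List ℕ)) (S : Set (List ℕ)) :
    iterDeriv D S 0 = clTr S := by
  rw [iterDeriv, Ordinal.limitRecOn_zero]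

theorem iterDeriv_add_one (D : Set (List ℕ) → Set (List ℕ)) (S : Set (List ℕ))
    (γ : Ordinal.{0}) : iterDeriv D S (γ + 1) = D (iterDeriv D S γ) := by
  rw [iterDeriv, Ordinal.limitRecOn_add_one]
  rfl

theorem iterDeriv_limit (D : Set (List ℕ) → Set (List ℕ)) (S : Set (List ℕ))
    {γ : Ordinal.{0}} (h : Order.IsSuccLimit γ) :
    iterDeriv D S γ = ⋂ b < γ, iterDeriv D S b := by
  rw [iterDeriv, Ordinal.limitRecOn_limit _ _ _ _ h]
  rfl

theorem isTree_iterDeriv (S : Set (List ℕ)) (γ : Ordinal.{0}) :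
    IsTree (iterDeriv leafDeriv S γ) := by
  induction γ using Ordinal.limitRecOn with
  | zero => rw [iterDeriv_zero]; exact fun s t hst ⟨u, hu, htu⟩ => ⟨u, hu, hst.trans htu⟩
  | add_one γ ih => rw [iterDeriv_add_one]; exact ih.leafDeriv
  | limit γ hγ ih =>
    rw [iterDeriv_limit _ _ hγ]
    intro s t hst ht
    simp only [Set.mem_iInter] at ht ⊢
    exact fun b hb => ih b hb hst (ht b hb)

theorem iterDeriv_antitone (S : Set (List ℕ)) : Antitone (iterDeriv leafDeriv S) := by
  refine antitone_iff_forall_lt.2 fun β γ hβγ => ?_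
  induction γ using Ordinal.limitRecOn with
  | zero => exact absurd hβγ (not_lt_of_ge zero_le)
  | add_one γ ih =>
    rw [iterDeriv_add_one]
    rcases (Order.lt_add_one_iff.1 hβγ).eq_or_lt with rfl | h
    · exact fun _ ht => ht.1
    · exact fun _ ht => ih h ht.1
  | limit γ hγ ih =>
    rw [iterDeriv_limit _ _ hγ]
    exact Set.biInter_subset_of_mem hβγ

theorem iterDeriv_subtreeAt {T : Set (List ℕ)} (hT : IsTree T) (t : List ℕ) (γ : Ordinal.{0}) :
    iterDeriv leafDeriv (subtreeAt T t) γ = subtreeAt (iterDeriv leafDeriv T γ) t := by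
  induction γ using Ordinal.limitRecOn with
  | zero => rw [iterDeriv_zero, iterDeriv_zero, (hT.subtreeAt t).clTr_eq, hT.clTr_eq]
  | add_one γ ih => rw [iterDeriv_add_one, iterDeriv_add_one, ih, leafDeriv_subtreeAt]
  | limit γ hγ ih =>
    rw [iterDeriv_limit _ _ hγ, iterDeriv_limit _ _ hγ, Set.iInter₂_congr ih]
    exact (Set.preimage_iInter₂ (f := (t ++ ·))).symm

section LeafRank

variable {S T : Set (List ℕ)}

theorem iterDeriv_leafRank_add_one (hr : leafRank S < omega1) :
    iterDeriv leafDeriv S (leafRank S + 1) = ∅ := by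
  have hex : ∃ γ : Ordinal.{0}, γ < omega1 ∧ iterDeriv leafDeriv S (γ + 1) = ∅ := by
    by_contra h
    rw [leafRank, if_neg h] at hr
    exact hr.false
  rw [leafRank, if_pos hex]
  exact csInf_mem (hex.imp fun _ => And.right)

theorem leafRank_le_iff {γ : Ordinal.{0}} (hγ : γ < omega1) :
    leafRank S ≤ γ ↔ [] ∉ iterDeriv leafDeriv S (γ + 1) := by
  rw [← (isTree_iterDeriv S _).eq_empty_iff]
  refine ⟨fun h => Set.subset_empty_iff.1 ?_, fun h => ?_⟩
  · exact (iterDeriv_antitone S (by gcongr)).trans_eq (iterDeriv_leafRank_add_one (h.trans_lt hγ))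
  · rw [leafRank, if_pos ⟨γ, hγ, h⟩]
    exact csInf_le' h

theorem nil_mem_iterDeriv_iff (hS : IsTree S) (h : [] ∈ S) (hr : leafRank S < omega1)
    {γ : Ordinal.{0}} : [] ∈ iterDeriv leafDeriv S γ ↔ γ ≤ leafRank S := by
  refine ⟨fun hγ => not_lt.1 fun hlt => ?_, fun hγ => ?_⟩
  · have := iterDeriv_antitone S (Order.add_one_le_of_lt hlt) hγ
    rwa [iterDeriv_leafRank_add_one hr] at this
  induction γ using Ordinal.limitRecOn with
  | zero => rwa [iterDeriv_zero, hS.clTr_eq]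
  | add_one γ _ =>
    have hγr : γ < leafRank S := Order.add_one_le_iff.1 hγ
    by_contra hn
    exact hγr.not_ge ((leafRank_le_iff (hγr.trans hr)).2 hn)
  | limit γ hγl ih =>
    rw [iterDeriv_limit _ _ hγl]
    exact Set.mem_iInter₂.2 fun b hb => ih b hb (hb.le.trans hγ)

theorem leafRank_subtreeAt_le (hT : IsTree T) (hr : leafRank T < omega1) (t : List ℕ) :
    leafRank (subtreeAt T t) ≤ leafRank T := by
  rw [leafRank_le_iff hr, iterDeriv_subtreeAt hT, nil_mem_subtreeAt,
    iterDeriv_leafRank_add_one hr]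
  exact Set.notMem_empty t

theorem leafRank_subtreeAt_lt (hT : IsTree T) (hr : leafRank T < omega1) {t : List ℕ} {n : ℕ}
    (hn : t ++ [n] ∈ T) : leafRank (subtreeAt T (t ++ [n])) < leafRank (subtreeAt T t) := by
  have hTt := hT.subtreeAt t
  have hchild :
      [n] ∈ iterDeriv leafDeriv (subtreeAt T t) (leafRank (subtreeAt T (t ++ [n]))) := by
    rw [← nil_mem_subtreeAt, ← iterDeriv_subtreeAt hTt, subtreeAt_subtreeAt]
    exact (nil_mem_iterDeriv_iff (hT.subtreeAt _) (nil_mem_subtreeAt.2 hn)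
      ((leafRank_subtreeAt_le hT hr _).trans_lt hr)).2 le_rfl
  rw [← Order.add_one_le_iff, ← nil_mem_iterDeriv_iff hTt
    (nil_mem_subtreeAt.2 (hT (List.prefix_append t [n]) hn))
    ((leafRank_subtreeAt_le hT hr t).trans_lt hr), iterDeriv_add_one]
  exact (nil_mem_leafDeriv_iff (isTree_iterDeriv _ _)).2 ⟨n, hchild⟩

theorem leafRank_induction (hT : IsTree T) (hr : leafRank T < omega1) {P : List ℕ → Prop}
    (step : ∀ t ∈ T, (∀ n, t ++ [n] ∈ T → P (t ++ [n])) → P t) : ∀ t ∈ T, P t := by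
  intro t
  induction t using (InvImage.wf (fun t => leafRank (subtreeAt T t)) Ordinal.lt_wf).induction with
  | _ t ih => exact fun ht => step t ht fun n hn => ih _ (leafRank_subtreeAt_lt hT hr hn) hn

end LeafRank

def schemeExtension {Y : Type u} (T : Set (List ℕ)) (hT : IsTree T) (hr : leafRank T < omega1)
    (H : List ℕ → Set Y) : List ℕ → Set Y :=
  WellFounded.fix (InvImage.wf (fun t => leafRank (subtreeAt T t)) Ordinal.lt_wf) fun t ih =>
    if IsLeafOf T t then H t
    else if OddOrd (leafRank (subtreeAt T t)) then
      ⋃ n, ⋃ h : t ++ [n] ∈ T, ih (t ++ [n]) (leafRank_subtreeAt_lt hT hr h)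
    else ⋂ n, ⋂ h : t ++ [n] ∈ T, ih (t ++ [n]) (leafRank_subtreeAt_lt hT hr h)

section SchemeExtension

variable {Y : Type u} [TopologicalSpace Y] {T : Set (List ℕ)} {H E : List ℕ → Set Y}

theorem exists_isSchemeExtension (hT : IsTree T) (hr : leafRank T < omega1)
    (H : List ℕ → Set Y) : ∃ E, IsSchemeExtension Y T H E := by
  have heq : ∀ t, schemeExtension T hT hr H t =
      if IsLeafOf T t then H t
      else if OddOrd (leafRank (subtreeAt T t)) then
        ⋃ n, ⋃ _ : t ++ [n] ∈ T, schemeExtension T hT hr H (t ++ [n])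
      else ⋂ n, ⋂ _ : t ++ [n] ∈ T, schemeExtension T hT hr H (t ++ [n]) :=
    fun t => WellFounded.fix_eq _ _ _
  refine ⟨schemeExtension T hT hr H, fun t ht => by rw [heq, if_pos ht], ?_, ?_⟩
  · intro t _ hl ho
    rw [heq, if_neg hl, if_pos ho]
    rfl
  · intro t _ hl he
    rw [heq, if_neg hl, if_neg he.not_oddOrd]
    rfl

theorem IsSchemeExtension.subtreeAt (h : IsSchemeExtension Y T H E) (t : List ℕ) :
    IsSchemeExtension Y (subtreeAt T t) (fun s => H (t ++ s)) (fun s => E (t ++ s)) := by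
  refine ⟨fun s hs => h.1 _ (isLeafOf_subtreeAt.1 hs), fun s hs hl ho => ?_,
    fun s hs hl he => ?_⟩
  · rw [subtreeAt_subtreeAt] at ho
    simpa only [FBorelPaper.subtreeAt, List.append_assoc, Set.mem_ofPred_eq] using
      h.2.1 _ hs (mt isLeafOf_subtreeAt.2 hl) ho
  · rw [subtreeAt_subtreeAt] at he
    simpa only [FBorelPaper.subtreeAt, List.append_assoc, Set.mem_ofPred_eq] using
      h.2.2 _ hs (mt isLeafOf_subtreeAt.2 hl) he

theorem IsSchemeExtension.mem_of_mem (hT : IsTree T) (hr : leafRank T < omega1)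
    {H' E' : List ℕ → Set Y} (h : IsSchemeExtension Y T H E) (h' : IsSchemeExtension Y T H' E')
    {x : Y} (hx : ∀ t, IsLeafOf T t → x ∈ H t → x ∈ H' t) :
    ∀ t ∈ T, x ∈ E t → x ∈ E' t := by
  refine leafRank_induction hT hr fun t ht ih => ?_
  by_cases hl : IsLeafOf T t
  · rw [h.1 t hl, h'.1 t hl]
    exact hx t hl
  rcases evenOrd_or_oddOrd (leafRank (FBorelPaper.subtreeAt T t)) with he | ho
  · rw [h.2.2 t ht hl he, h'.2.2 t ht hl he]
    simp only [Set.mem_iInter₂]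
    exact fun hxt n hn => ih n hn (hxt n hn)
  · rw [h.2.1 t ht hl ho, h'.2.1 t ht hl ho]
    simp only [Set.mem_iUnion₂]
    exact fun ⟨n, hn, hxn⟩ => ⟨n, hn, ih n hn hxn⟩

theorem IsSchemeExtension.mem_fborel (hT : IsTree T) (hr : leafRank T < omega1)
    (hcl : ∀ t, IsLeafOf T t → IsClosed (H t)) (h : IsSchemeExtension Y T H E) :
    ∀ t ∈ T, E t ∈ FBorel Y (leafRank (FBorelPaper.subtreeAt T t)) := by
  refine leafRank_induction hT hr fun t ht ih => ?_
  by_cases hl : IsLeafOf T t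
  · rw [h.1 t hl]
    exact (hcl t hl).mem_fborel _
  obtain ⟨n, hn⟩ : ∃ n, t ++ [n] ∈ T := by
    by_contra! hno
    exact hl ⟨ht, hno⟩
  have hchild : ∀ m ∈ {m | t ++ [m] ∈ T},
      ∃ b < leafRank (FBorelPaper.subtreeAt T t), E (t ++ [m]) ∈ FBorel Y b :=
    fun m hm => ⟨_, leafRank_subtreeAt_lt hT hr hm, ih m hm⟩
  rcases evenOrd_or_oddOrd (leafRank (FBorelPaper.subtreeAt T t)) with he | ho
  · rw [h.2.2 t ht hl he]
    exact biInter_mem_fborel (zero_le.trans_lt (leafRank_subtreeAt_lt hT hr hn)).ne' he ⟨n, hn⟩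
      hchild
  · rw [h.2.1 t ht hl ho]
    exact biUnion_mem_fborel ho ⟨n, hn⟩ hchild

end SchemeExtension

section CanonTree

variable {a : Ordinal.{0}}

theorem canonTree_eq (a : Ordinal.{0}) :
    canonTree a =
      if a = 0 then {[]}
      else if omega1 ≤ a then Set.univ
      else {[]} ∪ ⋃ n : ℕ, List.cons n '' canonTree (canonIdx a n) := by
  rw [canonTree, WellFounded.fix_eq]
  rfl

theorem canonTree_zero : canonTree 0 = {[]} := by
  rw [canonTree_eq, if_pos rfl]

theorem nil_mem_canonTree (a : Ordinal.{0}) : [] ∈ canonTree a := by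
  rw [canonTree_eq]
  split_ifs <;> simp

theorem cons_mem_canonTree_iff (h0 : a ≠ 0) (ha : a < omega1) (n : ℕ) (s : List ℕ) :
    n :: s ∈ canonTree a ↔ s ∈ canonTree (canonIdx a n) := by
  rw [canonTree_eq, if_neg h0, if_neg (not_le.2 ha)]
  simp

theorem singleton_mem_canonTree (h0 : a ≠ 0) (ha : a < omega1) (n : ℕ) : [n] ∈ canonTree a :=
  (cons_mem_canonTree_iff h0 ha n []).2 (nil_mem_canonTree _)

theorem subtreeAt_canonTree_singleton (h0 : a ≠ 0) (ha : a < omega1) (n : ℕ) :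
    subtreeAt (canonTree a) [n] = canonTree (canonIdx a n) :=
  Set.ext fun s => cons_mem_canonTree_iff h0 ha n s

theorem isTree_canonTree (a : Ordinal.{0}) : IsTree (canonTree a) := by
  intro s
  induction s generalizing a with
  | nil => exact fun _ _ _ => nil_mem_canonTree a
  | cons n s ih =>
    rintro _ ⟨u, rfl⟩ ht
    rcases eq_or_ne a 0 with rfl | h0
    · simp [canonTree_zero] at ht
    rcases le_or_gt omega1 a with h1 | h1
    · rw [canonTree_eq, if_neg h0, if_pos h1]
      trivial
    · rw [List.cons_append, cons_mem_canonTree_iff h0 h1] at ht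
      exact (cons_mem_canonTree_iff h0 h1 n s).2 (ih _ (List.prefix_append s u) ht)

theorem wellFoundedTree_canonTree (ha : a < omega1) : WellFoundedTree (canonTree a) := by
  induction a using WellFoundedLT.induction with
  | _ a ih =>
    rintro ⟨σ, hσ⟩
    rcases eq_or_ne a 0 with rfl | h0
    · simpa [canonTree_zero, seqPrefix] using hσ 1
    refine ih _ (canonIdx_lt h0 (σ 0)) ((canonIdx_lt h0 _).trans ha)
      ⟨fun k => σ (k + 1), fun k => (cons_mem_canonTree_iff h0 ha _ _).1 ?_⟩
    simpa [seqPrefix, List.ofFn_succ] using hσ (k + 1)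

theorem leafRank_canonTree (ha : a < omega1) : leafRank (canonTree a) = a := by
  induction a using WellFoundedLT.induction with
  | _ a ih =>
    suffices key : ∀ γ < omega1, leafRank (canonTree a) ≤ γ ↔ a ≤ γ from
      le_antisymm ((key a ha).2 le_rfl) ((key _ (((key a ha).2 le_rfl).trans_lt ha)).1 le_rfl)
    intro γ hγ
    rw [leafRank_le_iff hγ, iterDeriv_add_one, nil_mem_leafDeriv_iff (isTree_iterDeriv _ _),
      not_exists]
    rcases eq_or_ne a 0 with rfl | h0
    · refine iff_of_true (fun n hn => ?_) zero_le
      have := iterDeriv_antitone _ zero_le hn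
      rw [iterDeriv_zero, (isTree_canonTree 0).clTr_eq, canonTree_zero] at this
      simp at this
    rw [← forall_canonIdx_lt_iff h0 ha]
    refine forall_congr' fun n => ?_
    have hn := canonIdx_lt h0 n
    rw [← nil_mem_subtreeAt, ← iterDeriv_subtreeAt (isTree_canonTree a),
      subtreeAt_canonTree_singleton h0 ha, nil_mem_iterDeriv_iff (isTree_canonTree _)
      (nil_mem_canonTree _) ((ih _ hn (hn.trans ha)).trans_lt (hn.trans ha)),
      ih _ hn (hn.trans ha), not_le]

end CanonTree

section Representation

variable {Y : Type u} [TopologicalSpace Y] {X : Set Y} {a : Ordinal.{0}}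

theorem extend_mem_fborel {c : ℕ → Ordinal.{0}} {m : ℕ → ℕ} (hm : Function.Injective m)
    {f : ℕ → Set Y} (hf : ∀ n, f n ∈ FBorel Y (c (m n))) {Z : ℕ → Set Y}
    (hZ : ∀ k, IsClosed (Z k)) (k : ℕ) : Function.extend m f Z k ∈ FBorel Y (c k) := by
  by_cases hk : ∃ n, m n = k
  · obtain ⟨n, rfl⟩ := hk
    rw [hm.extend_apply]
    exact hf n
  · rw [Function.extend_apply' _ _ _ hk]
    exact (hZ k).mem_fborel _

theorem exists_canonIdx_decomposition (h0 : a ≠ 0) (ha : a < omega1) (hX : X ∈ FBorel Y a) :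
    ∃ G : ℕ → Set Y, (∀ n, G n ∈ FBorel Y (canonIdx a n)) ∧
      (EvenOrd a → X = ⋂ n, G n) ∧ (OddOrd a → X = ⋃ n, G n) := by
  rcases evenOrd_or_oddOrd a with he | ho
  · obtain ⟨f, hf, rfl⟩ := (mem_fborel_of_evenOrd h0 he).1 hX
    choose b hb hfb using hf
    obtain ⟨m, hm, hbm⟩ := exists_injective_le_canonIdx h0 ha hb
    exact ⟨Function.extend m f ⊤,
      extend_mem_fborel hm (fun n => fborel_mono (hbm n) (hfb n)) fun _ => isClosed_univ,
      fun _ => (iInf_extend_top hm f).symm, fun ho => absurd ho he.not_oddOrd⟩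
  · obtain ⟨f, hf, rfl⟩ := (mem_fborel_of_oddOrd ho).1 hX
    choose b hb hfb using hf
    obtain ⟨m, hm, hbm⟩ := exists_injective_le_canonIdx h0 ha hb
    exact ⟨Function.extend m f ⊥,
      extend_mem_fborel hm (fun n => fborel_mono (hbm n) (hfb n)) fun _ => isClosed_empty,
      fun he => absurd ho he.not_oddOrd, fun _ => (iSup_extend_bot hm f).symm⟩

theorem exists_closed_leaf_scheme_canonTree (ha : a < omega1) (hX : X ∈ FBorel Y a) :
    ∃ H : List ℕ → Set Y, (∀ t, IsLeafOf (canonTree a) t → IsClosed (H t)) ∧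
      ∀ E, IsSchemeExtension Y (canonTree a) H E → E [] = X := by
  induction a using WellFoundedLT.induction generalizing X with
  | _ a ih =>
  rcases eq_or_ne a 0 with rfl | h0
  · have hleaf : IsLeafOf (canonTree 0) [] := ⟨nil_mem_canonTree 0, by simp [canonTree_zero]⟩
    exact ⟨fun _ => X, fun _ _ => mem_fborel_zero.1 hX, fun E hE => hE.1 [] hleaf⟩
  obtain ⟨G, hG, hGe, hGo⟩ := exists_canonIdx_decomposition h0 ha hX
  choose H hHcl hHE using fun n =>
    ih _ (canonIdx_lt h0 n) ((canonIdx_lt h0 n).trans ha) (hG n)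
  have hroot : ¬ IsLeafOf (canonTree a) [] := fun h => h.2 0 (singleton_mem_canonTree h0 ha 0)
  refine ⟨fun t => H t.headI t.tail, fun t ht => ?_, fun E hE => ?_⟩
  · cases t with
    | nil => exact absurd ht hroot
    | cons n s =>
      rw [← List.singleton_append, ← isLeafOf_subtreeAt,
        subtreeAt_canonTree_singleton h0 ha] at ht
      exact hHcl n s ht
  have hchild : ∀ n, E [n] = G n := by
    intro n
    have h := hE.subtreeAt [n]
    rw [subtreeAt_canonTree_singleton h0 ha n] at h
    exact hHE n _ h
  have hrank : leafRank (subtreeAt (canonTree a) []) = a := leafRank_canonTree ha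
  rcases evenOrd_or_oddOrd a with he | ho
  · rw [hE.2.2 [] (nil_mem_canonTree a) hroot (by rwa [hrank]), hGe he]
    simp [singleton_mem_canonTree h0 ha, hchild]
  · rw [hE.2.1 [] (nil_mem_canonTree a) hroot (by rwa [hrank]), hGo ho]
    simp [singleton_mem_canonTree h0 ha, hchild]

variable {T : Set (List ℕ)} {H E : List ℕ → Set Y}

theorem IsSchemeExtension.exists_closure_scheme (hT : IsTree T) (hr : leafRank T < omega1)
    (hcl : ∀ t, IsLeafOf T t → IsClosed (H t)) (h : IsSchemeExtension Y T H E)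
    (hnil : [] ∈ T) :
    ∃ H' E' : List ℕ → Set Y, (∀ t, IsLeafOf T t → H' t ⊆ E []) ∧
      IsSchemeExtension Y T (fun t => closure (H' t ∩ E [])) E' ∧ E' [] = E [] := by
  obtain ⟨E', h'⟩ := exists_isSchemeExtension hT hr fun t => closure (H t ∩ E [] ∩ E [])
  refine ⟨fun t => H t ∩ E [], E', fun _ _ => Set.inter_subset_right, h',
    Set.Subset.antisymm (fun x hx => ?_) fun x hx => ?_⟩
  · refine h'.mem_of_mem hT hr h (fun t ht hxt => ?_) [] hnil hx
    exact (hcl t ht).closure_subset_iff.2 (Set.inter_subset_left.trans Set.inter_subset_left) hxt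
  · exact h.mem_of_mem hT hr h' (fun t _ hxt => subset_closure ⟨⟨hxt, hx⟩, hx⟩) [] hnil hx

end Representation

/-- Existence of simple `F_α`-representations: for `X ⊆ Y` and `α < ω₁`,
membership `X ∈ F_α(Y)` is equivalent to `X` being computed at the root by: (ii) a closed
leaf-scheme over a well-founded tree of leaf-rank `≤ α`; (iii) a closed leaf-scheme over
the canonical tree `T_α`; (iv) the scheme of closures `cl_Y(H(t) ∩ X)` of a leaf-scheme
of subsets of `X` over a tree of leaf-rank `≤ α`; (v) the scheme of closures of a
leaf-scheme of subsets of `X` over `T_α`. -/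
theorem simple_representation_tfae (Y : Type u) [TopologicalSpace Y] (X : Set Y)
    (α : Ordinal.{0}) (hα : α < omega1) :
    List.TFAE [
      X ∈ FBorel Y α,
      ∃ (T : Set (List ℕ)) (H E : List ℕ → Set Y), IsTree T ∧ WellFoundedTree T ∧
        [] ∈ T ∧ leafRank T ≤ α ∧ (∀ t, IsLeafOf T t → IsClosed (H t)) ∧
        IsSchemeExtension Y T H E ∧ E [] = X,
      ∃ H E : List ℕ → Set Y, (∀ t, IsLeafOf (canonTree α) t → IsClosed (H t)) ∧
        IsSchemeExtension Y (canonTree α) H E ∧ E [] = X,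
      ∃ (T : Set (List ℕ)) (H E : List ℕ → Set Y), IsTree T ∧ WellFoundedTree T ∧
        [] ∈ T ∧ leafRank T ≤ α ∧ (∀ t, IsLeafOf T t → H t ⊆ X) ∧
        IsSchemeExtension Y T (fun t => closure (H t ∩ X)) E ∧ E [] = X,
      ∃ H E : List ℕ → Set Y, (∀ t, IsLeafOf (canonTree α) t → H t ⊆ X) ∧
        IsSchemeExtension Y (canonTree α) (fun t => closure (H t ∩ X)) E ∧ E [] = X
    ] := by
  have hT := isTree_canonTree α
  have hr : leafRank (canonTree α) < omega1 := (leafRank_canonTree hα).trans_lt hα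
  tfae_have 1 → 3 := fun hX => by
    obtain ⟨H, hcl, hroot⟩ := exists_closed_leaf_scheme_canonTree hα hX
    obtain ⟨E, hE⟩ := exists_isSchemeExtension hT hr H
    exact ⟨H, E, hcl, hE, hroot E hE⟩
  tfae_have 3 → 5 := by
    rintro ⟨H, E, hcl, hE, rfl⟩
    exact hE.exists_closure_scheme hT hr hcl (nil_mem_canonTree α)
  tfae_have 5 → 4 := fun ⟨H, E, hsub, hE, hroot⟩ =>
    ⟨canonTree α, H, E, hT, wellFoundedTree_canonTree hα, nil_mem_canonTree α,
      (leafRank_canonTree hα).le, hsub, hE, hroot⟩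
  tfae_have 4 → 2 := fun ⟨T, H, E, hT, hwf, hnil, hle, _, hE, hroot⟩ =>
    ⟨T, _, E, hT, hwf, hnil, hle, fun _ _ => isClosed_closure, hE, hroot⟩
  tfae_have 2 → 1 := by
    rintro ⟨T, H, E, hT, -, hnil, hle, hcl, hE, rfl⟩
    exact fborel_mono hle (hE.mem_fborel hT (hle.trans_lt hα) hcl [] hnil)
  tfae_finish

end FBorelPaper
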